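/- arXiv:2309.05389 — 2 statements merged into one kernel-verified Lean document; each statement's English description precedes it below -/
import Mathlib

section
/- For any monotone function ψ on the powerset of a set D, and any element p ∈ D, p is in the least fixed point μY.ψ(Y) if and only if p ∈ ψ(μY.(ψ(Y) \ {p})). -/
def lfp {D : Type*} (f : Set D → Set D) : Set D := ⋂₀ {X | f X ⊆ X}

lemma lfp_le {D : Type*} (f : Set D → Set D) {X : Set D} (h : f X ⊆ X) : lfp f ⊆ X :=
  Set.sInter_subset_of_mem h

lemma le_lfp {D : Type*} (f : Set D → Set D) (hf : Monotone f) : f (lfp f) ⊆ lfp f := by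
  intro x hx
  intro X hX
  exact hX (hf (lfp_le f hX) hx)

lemma lfp_fixed {D : Type*} (f : Set D → Set D) (hf : Monotone f) : lfp f = f (lfp f) := by
  have h1 : f (lfp f) ⊆ lfp f := le_lfp f hf
  exact subset_antisymm (lfp_le f (hf h1)) h1

theorem reduction_lemma_mu {D : Type*} (ψ : Set D → Set D) (hmono : Monotone ψ) (p : D) :
    p ∈ lfp ψ ↔ p ∈ ψ (lfp (fun Y => ψ Y \ {p})) := by
  set g : Set D → Set D := fun Y => ψ Y \ {p} with hg
  have hgm : Monotone g := fun A B hAB => Set.diff_subset_diff_left (hmono hAB)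
  have hfix : lfp g = ψ (lfp g) \ {p} := lfp_fixed g hgm
  constructor
  · intro hp
    by_contra hnp
    have hsub : ψ (lfp g) ⊆ lfp g := by
      intro x hx
      rw [hfix]
      exact ⟨hx, fun hxp => hnp (hxp ▸ hx)⟩
    have := lfp_le ψ hsub hp
    rw [hfix] at this
    exact this.2 rfl
  · intro hp
    have hsub : lfp g ⊆ lfp ψ := lfp_le g (fun x hx => le_lfp ψ hmono hx.1)
    exact le_lfp ψ hmono (hmono hsub hp)
end

section
/- For any monotone function ψ on the powerset of a set D, and any element p ∈ D, p is in the greatest fixed point νY.ψ(Y) if and only if p ∈ ψ(νY.(ψ(Y) ∪ {p})). -/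
def gfp {D : Type*} (f : Set D → Set D) : Set D := ⋃₀ {X | X ⊆ f X}

lemma le_gfp {D : Type*} {f : Set D → Set D} {X : Set D} (h : X ⊆ f X) : X ⊆ gfp f :=
  Set.subset_sUnion_of_mem h

lemma gfp_post {D : Type*} {f : Set D → Set D} (hf : Monotone f) : gfp f ⊆ f (gfp f) := by
  intro x hx
  obtain ⟨X, hX, hxX⟩ := hx
  exact hf (le_gfp hX) (hX hxX)

theorem reduction_lemma_nu {D : Type*} (ψ : Set D → Set D) (hmono : Monotone ψ) (p : D) :
    p ∈ gfp ψ ↔ p ∈ ψ (gfp (fun Y => ψ Y ∪ {p})) := by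
  constructor
  · intro hp
    have h1 : gfp ψ ⊆ gfp (fun Y => ψ Y ∪ {p}) :=
      le_gfp (fun x hx => Or.inl (gfp_post hmono hx))
    exact hmono h1 (gfp_post hmono hp)
  · intro hp
    have hmono' : Monotone (fun Y => ψ Y ∪ {p}) :=
      fun A B h => Set.union_subset_union_left _ (hmono h)
    set G' := gfp (fun Y => ψ Y ∪ {p}) with hG'
    have hpost : G' ⊆ ψ G' ∪ {p} := gfp_post hmono'
    have h2 : G' ⊆ ψ G' := fun x hx => by
      rcases hpost hx with h | h
      · exact h
      · rw [Set.mem_singleton_iff] at h; subst h; exact hp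
    have h3 : ψ G' ⊆ ψ (ψ G') := hmono h2
    exact le_gfp h3 hp
end
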